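/- arXiv:0911.0922 — 3 statements merged into one kernel-verified Lean document; each statement's English description precedes it below -/
import Mathlib

section
/- Conversely, given a commutative associative unital ℂ-algebra A with a derivation T, defining a_(n) b = 0 for n ≥ 0 and a_(n) b = (T^{−n−1}(a)/(−n−1)!) · b for n ≤ −1, with vacuum 𝟙 = 1_A, yields a vertex algebra structure on A (the Borcherds identity and vacuum axioms hold). -/
/-!
The vertex operator is `Y(a, z) b = (e^{zT} a) b`, so every mode is a product of divided
powers `T⁽ᵖ⁾ = Tᵖ / p!`. By the Leibniz rule `T⁽ᵖ⁾(xy) = ∑ᵢ₊ⱼ₌ₚ T⁽ⁱ⁾x T⁽ʲ⁾y` and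
`T⁽ⁱ⁾T⁽ˢ⁾ = C(i+s, s) T⁽ⁱ⁺ˢ⁾`, each term of the Borcherds identity for `a, b, c` and `m, n, k`
is an integer combination of the elements `T⁽ᵖ⁾a · T⁽ᴺ⁻ᵖ⁾b · c` with `N = -(m+n+k) - 2` (and
vanishes if `N < 0`). Comparing coefficients, the left side gives `C(m+p, -n-1)` by
Vandermonde's identity, the right side a difference of two binomial coefficients of `n`, and
the two agree by the upper negation formula `C(-ν-1, d) = (-1)^d C(ν+d, d)` and the symmetry
of binomial coefficients.
-/

open Finset Function

theorem Ring.choose_neg_sub_one (ν d : ℕ) :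
    Ring.choose (-(ν : ℤ) - 1) d = (-1) ^ d * ((ν + d).choose d : ℤ) := by
  rw [show -(ν : ℤ) - 1 = -((ν + 1 : ℕ) : ℤ) by push_cast; ring, Ring.choose_neg,
    show ((ν + 1 : ℕ) : ℤ) + d - 1 = ((ν + d : ℕ) : ℤ) by push_cast; ring, Ring.choose_natCast,
    Units.smul_def, Int.coe_negOnePow_natCast, smul_eq_mul]

theorem choose_reflection_of_nonneg {n : ℤ} (hn : 0 ≤ n) (M : ℤ) :
    (if n < 0 then Ring.choose M (-n - 1).toNat else 0) =
      (if 0 ≤ M + n + 1 then (-1) ^ (M + n + 1).toNat * Ring.choose n (M + n + 1).toNat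
        else 0) -
      n.negOnePow * if M < 0 then (-1) ^ (-M - 1).toNat * Ring.choose n (-M - 1).toNat else 0 := by
  rw [if_neg (not_lt.2 hn)]
  lift n to ℕ using hn
  rcases le_or_gt 0 M with hM | hM
  · rw [if_neg (not_lt.2 hM), Ring.choose_natCast, Nat.choose_eq_zero_of_lt (by omega)]
    simp
  obtain ⟨μ, rfl⟩ : ∃ μ : ℕ, M = -μ - 1 := ⟨(-M - 1).toNat, by omega⟩
  rw [if_pos hM, Int.coe_negOnePow_natCast, show (-(-(μ : ℤ) - 1) - 1).toNat = μ by omega]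
  rcases le_or_gt μ n with hμ | hμ
  · rw [if_pos (by omega), show (-(μ : ℤ) - 1 + n + 1).toNat = n - μ by omega,
      Ring.choose_natCast, Ring.choose_natCast, Nat.choose_symm hμ]
    obtain ⟨d, rfl⟩ := Nat.exists_eq_add_of_le hμ
    rw [Nat.add_sub_cancel_left, pow_add]
    ring_nf
    simp [pow_mul']
  · rw [if_neg (by omega), Ring.choose_natCast, Nat.choose_eq_zero_of_lt hμ]
    simp

theorem choose_reflection_of_neg {n : ℤ} (hn : n < 0) (M : ℤ) :
    (if n < 0 then Ring.choose M (-n - 1).toNat else 0) =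
      (if 0 ≤ M + n + 1 then (-1) ^ (M + n + 1).toNat * Ring.choose n (M + n + 1).toNat
        else 0) -
      n.negOnePow * if M < 0 then (-1) ^ (-M - 1).toNat * Ring.choose n (-M - 1).toNat else 0 := by
  obtain ⟨ν, rfl⟩ : ∃ ν : ℕ, n = -ν - 1 := ⟨(-n - 1).toNat, by omega⟩
  rw [if_pos hn, show (-(-(ν : ℤ) - 1) - 1).toNat = ν by omega]
  rcases le_or_gt 0 M with hM | hM
  · rw [if_neg (not_lt.2 hM), mul_zero, sub_zero]
    lift M to ℕ using hM
    rw [Ring.choose_natCast]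
    rcases le_or_gt ν M with hν | hν
    · rw [if_pos (by omega), show ((M : ℤ) + (-ν - 1) + 1).toNat = M - ν by omega,
        Ring.choose_neg_sub_one, ← mul_assoc, ← mul_pow, show ν + (M - ν) = M by omega,
        Nat.choose_symm hν]
      simp
    · rw [if_neg (by omega), Nat.choose_eq_zero_of_lt hν, Nat.cast_zero]
  obtain ⟨μ, rfl⟩ : ∃ μ : ℕ, M = -μ - 1 := ⟨(-M - 1).toNat, by omega⟩
  rw [if_neg (by omega), if_pos hM, show (-(-(μ : ℤ) - 1) - 1).toNat = μ by omega,
    Ring.choose_neg_sub_one, Ring.choose_neg_sub_one,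
    show -(ν : ℤ) - 1 = -((ν + 1 : ℕ) : ℤ) by push_cast; ring, Int.negOnePow_neg,
    Int.coe_negOnePow_natCast, add_comm ν μ, Nat.choose_symm_add]
  ring_nf
  simp [pow_mul']

-- The comparison of coefficients in the Borcherds identity, with `M = m + p`; in each sign case
-- of `n` and `M` it is the upper negation formula together with the symmetry of `Nat.choose`.
theorem choose_reflection (M n : ℤ) :
    (if n < 0 then Ring.choose M (-n - 1).toNat else 0) =
      (if 0 ≤ M + n + 1 then (-1) ^ (M + n + 1).toNat * Ring.choose n (M + n + 1).toNat
        else 0) -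
      n.negOnePow * if M < 0 then (-1) ^ (-M - 1).toNat * Ring.choose n (-M - 1).toNat else 0 := by
  rcases le_or_gt 0 n with hn | hn
  · exact choose_reflection_of_nonneg hn M
  · exact choose_reflection_of_neg hn M

theorem finsum_sum_smul_comm {ι κ R M : Type*} [Semiring R] [AddCommMonoid M] [Module R M]
    (s : Finset κ) (c : ι → κ → R) (x : κ → M) (hc : ∀ k ∈ s, (support (c · k)).Finite) :
    ∑ᶠ i, ∑ k ∈ s, c i k • x k = ∑ k ∈ s, (∑ᶠ i, c i k) • x k := by
  have hfin : (⋃ k ∈ (s : Set κ), support (c · k)).Finite := s.finite_toSet.biUnion hc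
  have hsub : ∀ k ∈ s, support (c · k) ⊆ hfin.toFinset := fun k hk =>
    hfin.coe_toFinset.symm ▸ Set.subset_biUnion_of_mem (u := fun k => support (c · k)) hk
  rw [finsum_eq_sum_of_support_subset _ (s := hfin.toFinset), sum_comm]
  · refine sum_congr rfl fun k hk => ?_
    rw [finsum_eq_sum_of_support_subset _ (hsub k hk), sum_smul]
  · intro i hi
    obtain ⟨k, hk, hne⟩ := exists_ne_zero_of_sum_ne_zero hi
    exact hsub k hk fun h => hne (by rw [show c i k = 0 from h, zero_smul])

theorem finite_support_ite_natCast_eq {R : Type*} [Zero R] (t : ℤ) (g : ℕ → R) :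
    (support fun j : ℕ => if (j : ℤ) = t then g j else 0).Finite :=
  (Set.finite_singleton t.toNat).subset fun j hj => by
    by_contra h
    rw [Set.mem_singleton_iff] at h
    exact hj (if_neg (by omega))

theorem finsum_ite_natCast_eq {R : Type*} [AddCommMonoid R] (t : ℤ) (g : ℕ → R) :
    ∑ᶠ j : ℕ, (if (j : ℤ) = t then g j else 0) = if 0 ≤ t then g t.toNat else 0 := by
  rcases le_or_gt 0 t with ht | ht
  · rw [finsum_eq_single _ t.toNat fun j hj => if_neg (by omega), if_pos (by omega), if_pos ht]
  · rw [if_neg (not_le.2 ht), finsum_congr fun j => if_neg (by omega), finsum_zero]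

-- The coefficients of `D⁽ᵖ⁾a · D⁽ᴺ⁻ᵖ⁾b · c` in the `j`-th terms of the two sides of the Borcherds
-- identity, where `N = -(m + n + k) - 2`.
def borcherdsLeftCoeff (m n : ℤ) (p j : ℕ) : ℤ :=
  Ring.choose m j * if n + j < 0 then (p.choose (-(n + j) - 1).toNat : ℤ) else 0

def borcherdsRightCoeff (m n : ℤ) (p j : ℕ) : ℤ :=
  (-1) ^ j * Ring.choose n j *
    ((if m + n - j = -(p : ℤ) - 1 then 1 else 0) -
      n.negOnePow * if m + j = -(p : ℤ) - 1 then 1 else 0)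

theorem finite_support_borcherdsLeftCoeff (m n : ℤ) (p : ℕ) :
    (support (borcherdsLeftCoeff m n p)).Finite :=
  (Set.finite_Iio (-n).toNat).subset fun j hj => by
    by_contra h
    rw [Set.mem_Iio, not_lt] at h
    exact hj (by rw [borcherdsLeftCoeff, if_neg (by omega), mul_zero])

theorem borcherdsRightCoeff_eq (m n : ℤ) (p j : ℕ) :
    borcherdsRightCoeff m n p j =
      (if (j : ℤ) = m + p + n + 1 then (-1) ^ j * Ring.choose n j else 0) -
        n.negOnePow * if (j : ℤ) = -(m + p) - 1 then (-1) ^ j * Ring.choose n j else 0 := by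
  unfold borcherdsRightCoeff
  split_ifs <;> first | omega | ring

theorem finite_support_borcherdsRightCoeff (m n : ℤ) (p : ℕ) :
    (support (borcherdsRightCoeff m n p)).Finite := by
  let g : ℕ → ℤ := fun j => (-1) ^ j * Ring.choose n j
  refine ((finite_support_ite_natCast_eq (m + p + n + 1) g).union
    (finite_support_ite_natCast_eq (-(m + p) - 1) g)).subset fun j hj => ?_
  by_contra h
  simp only [Set.mem_union, mem_support, not_or, not_not] at h
  rw [mem_support, borcherdsRightCoeff_eq, h.1, h.2, mul_zero, sub_zero] at hj
  exact hj rfl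

theorem finsum_borcherdsLeftCoeff (m n : ℤ) (p : ℕ) :
    ∑ᶠ j, borcherdsLeftCoeff m n p j =
      if n < 0 then Ring.choose (m + p) (-n - 1).toNat else 0 := by
  rcases le_or_gt 0 n with hn | hn
  · rw [if_neg (not_lt.2 hn), finsum_congr fun j => by
      rw [borcherdsLeftCoeff, if_neg (by omega), mul_zero], finsum_zero]
  obtain ⟨ν, rfl⟩ : ∃ ν : ℕ, n = -ν - 1 := ⟨(-n - 1).toNat, by omega⟩
  rw [finsum_eq_sum_of_support_subset _ (s := range (ν + 1)) fun j hj => ?_, if_pos hn,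
    show (-(-(ν : ℤ) - 1) - 1).toNat = ν by omega, Ring.add_choose_eq _ (Commute.all _ _),
    Nat.sum_antidiagonal_eq_sum_range_succ_mk]
  · refine sum_congr rfl fun j hj => ?_
    have := mem_range.1 hj
    rw [borcherdsLeftCoeff, if_pos (by omega), Ring.choose_natCast,
      show (-(-(ν : ℤ) - 1 + j) - 1).toNat = ν - j by omega]
  · by_contra h
    rw [coe_range, Set.mem_Iio, not_lt] at h
    exact hj (by rw [borcherdsLeftCoeff, if_neg (by omega), mul_zero])

theorem finsum_borcherdsRightCoeff (m n : ℤ) (p : ℕ) :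
    ∑ᶠ j, borcherdsRightCoeff m n p j =
      (if 0 ≤ m + p + n + 1 then
        (-1) ^ (m + p + n + 1).toNat * Ring.choose n (m + p + n + 1).toNat else 0) -
      n.negOnePow * (if m + p < 0 then
        (-1) ^ (-(m + p) - 1).toNat * Ring.choose n (-(m + p) - 1).toNat else 0) := by
  simp_rw [borcherdsRightCoeff_eq]
  rw [finsum_sub_distrib (finite_support_ite_natCast_eq _ _)
      ((finite_support_ite_natCast_eq _ _).subset (support_mul_subset_right _ _)),
    ← mul_finsum, finsum_ite_natCast_eq, finsum_ite_natCast_eq]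
  simp only [show 0 ≤ -(m + p) - 1 ↔ m + p < 0 by omega]

theorem finsum_borcherdsLeftCoeff_eq_finsum_borcherdsRightCoeff (m n : ℤ) (p : ℕ) :
    ∑ᶠ j, borcherdsLeftCoeff m n p j = ∑ᶠ j, borcherdsRightCoeff m n p j := by
  rw [finsum_borcherdsLeftCoeff, finsum_borcherdsRightCoeff, choose_reflection]

namespace Derivation

section Leibniz

variable {R A : Type*} [CommSemiring R] [CommSemiring A] [Algebra R A] (D : Derivation R A A)

theorem iterate_apply_mul (n : ℕ) (a b : A) :
    D^[n] (a * b) = ∑ ij ∈ antidiagonal n, n.choose ij.1 • (D^[ij.1] a * D^[ij.2] b) := by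
  induction n with
  | zero => simp
  | succ n ih =>
    rw [sum_antidiagonal_choose_succ_nsmul (M := A) (fun i j => D^[i] a * D^[j] b) n]
    simp only [Function.iterate_succ_apply', ih, map_sum, map_nsmul, leibniz, smul_eq_mul,
      smul_add, sum_add_distrib]
    congr 1
    refine sum_congr rfl fun ⟨i, j⟩ hij => ?_
    rw [n.choose_symm_of_eq_add (mem_antidiagonal.1 hij).symm, mul_comm]

theorem iterate_succ_apply_one (n : ℕ) : D^[n + 1] (1 : A) = 0 := by
  rw [Function.iterate_succ_apply, map_one_eq_zero, iterate_map_zero]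

theorem iterate_map_smul (p : ℕ) (c : R) (a : A) : D^[p] (c • a) = c • D^[p] a := by
  induction p generalizing a with
  | zero => rfl
  | succ p ih => rw [Function.iterate_succ_apply, map_smul, ih, Function.iterate_succ_apply]

end Leibniz

section DividedIterate

variable {K A : Type*} [Field K] [CommRing A] [Algebra K A] (D : Derivation K A A)

noncomputable def dividedIterate (p : ℕ) (a : A) : A := (p.factorial : K)⁻¹ • D^[p] a

@[simp]
theorem dividedIterate_zero_apply (a : A) : D.dividedIterate 0 a = a := by
  simp [dividedIterate]

theorem dividedIterate_succ_one (p : ℕ) : D.dividedIterate (p + 1) (1 : A) = 0 := by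
  rw [dividedIterate, iterate_succ_apply_one, smul_zero]

theorem dividedIterate_mul [CharZero K] (n : ℕ) (a b : A) :
    D.dividedIterate n (a * b) =
      ∑ ij ∈ antidiagonal n, D.dividedIterate ij.1 a * D.dividedIterate ij.2 b := by
  rw [dividedIterate, iterate_apply_mul, smul_sum]
  refine sum_congr rfl fun ⟨i, j⟩ hij => ?_
  obtain rfl : n = i + j := (mem_antidiagonal.1 hij).symm
  rw [dividedIterate, dividedIterate, smul_mul_smul_comm, ← Nat.cast_smul_eq_nsmul K, smul_smul,
    Nat.cast_add_choose]
  have := (i + j).factorial_ne_zero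
  congr 1
  field_simp

theorem dividedIterate_dividedIterate [CharZero K] (i s : ℕ) (a : A) :
    D.dividedIterate i (D.dividedIterate s a) =
      (s + i).choose s • D.dividedIterate (s + i) a := by
  rw [dividedIterate, dividedIterate, iterate_map_smul, ← Function.iterate_add_apply, smul_smul,
    dividedIterate, ← Nat.cast_smul_eq_nsmul K, smul_smul, Nat.cast_add_choose, add_comm i s]
  have := (s + i).factorial_ne_zero
  congr 1
  field_simp

theorem dividedIterate_dividedIterate_mul [CharZero K] (s q : ℕ) (a b : A) :
    D.dividedIterate q (D.dividedIterate s a * b) =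
      ∑ p ∈ range (s + q + 1),
        p.choose s • (D.dividedIterate p a * D.dividedIterate (s + q - p) b) := by
  have below_s : ∑ p ∈ range s,
      p.choose s • (D.dividedIterate p a * D.dividedIterate (s + q - p) b) = 0 :=
    sum_eq_zero fun p hp => by rw [Nat.choose_eq_zero_of_lt (mem_range.1 hp), zero_smul]
  rw [dividedIterate_mul, Nat.sum_antidiagonal_eq_sum_range_succ_mk, add_assoc, sum_range_add,
    below_s, zero_add]
  refine sum_congr rfl fun i _ => ?_
  rw [dividedIterate_dividedIterate, smul_mul_assoc, Nat.add_sub_add_left]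

end DividedIterate

section VertexProduct

variable {K A : Type*} [Field K] [CommRing A] [Algebra K A] (D : Derivation K A A)

-- `a_(n) b`, the coefficient of `z^(-n-1)` in `Y(a, z) b = (e^{zD} a) b`.
noncomputable def vertexProduct (n : ℤ) (a b : A) : A :=
  if 0 ≤ n then 0 else D.dividedIterate (-n - 1).toNat a * b

theorem vertexProduct_of_nonneg {n : ℤ} (hn : 0 ≤ n) (a b : A) : D.vertexProduct n a b = 0 :=
  if_pos hn

theorem vertexProduct_neg_sub_one (p : ℕ) (a b : A) :
    D.vertexProduct (-p - 1) a b = D.dividedIterate p a * b := by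
  rw [vertexProduct, if_neg (by omega), show (-(-(p : ℤ) - 1) - 1).toNat = p by omega]

theorem vertexProduct_neg_one (a b : A) : D.vertexProduct (-1) a b = a * b := by
  simpa using D.vertexProduct_neg_sub_one 0 a b

@[simp]
theorem zero_vertexProduct (n : ℤ) (b : A) : D.vertexProduct n 0 b = 0 := by
  simp [vertexProduct, dividedIterate]

@[simp]
theorem vertexProduct_zero (n : ℤ) (a : A) : D.vertexProduct n a 0 = 0 := by
  simp [vertexProduct]

theorem one_vertexProduct (n : ℤ) (b : A) :
    D.vertexProduct n 1 b = if n = -1 then b else 0 := by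
  rcases le_or_gt 0 n with hn | hn
  · rw [vertexProduct_of_nonneg D hn, if_neg (by omega)]
  obtain ⟨p, rfl⟩ : ∃ p : ℕ, n = -p - 1 := ⟨(-n - 1).toNat, by omega⟩
  rcases p with _ | p
  · simp [vertexProduct_neg_one]
  · rw [vertexProduct_neg_sub_one, dividedIterate_succ_one, zero_mul, if_neg (by omega)]

theorem vertexProduct_left_comm (r s : ℤ) (a b c : A) :
    D.vertexProduct r a (D.vertexProduct s b c) =
      D.vertexProduct s b (D.vertexProduct r a c) := by
  unfold vertexProduct
  split_ifs <;> simp only [mul_zero, mul_left_comm]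

theorem vertexProduct_vertexProduct_eq_zero {r s : ℤ} (h : -1 ≤ r + s) (a b c : A) :
    D.vertexProduct r a (D.vertexProduct s b c) = 0 := by
  rcases le_or_gt 0 r with hr | hr
  · exact D.vertexProduct_of_nonneg hr _ _
  · rw [D.vertexProduct_of_nonneg (show 0 ≤ s by omega), vertexProduct_zero]

theorem vertexProduct_vertexProduct_left_eq_zero {r s : ℤ} (h : -1 ≤ r + s) (a b c : A) :
    D.vertexProduct r (D.vertexProduct s a b) c = 0 := by
  rcases le_or_gt 0 s with hs | hs
  · rw [D.vertexProduct_of_nonneg hs, zero_vertexProduct]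
  · exact D.vertexProduct_of_nonneg (by omega) _ _

theorem vertexProduct_vertexProduct_eq_sum (N : ℕ) {r s : ℤ} (h : r + s = -N - 2) (a b c : A) :
    D.vertexProduct r a (D.vertexProduct s b c) =
      ∑ p ∈ range (N + 1), (if r = -(p : ℤ) - 1 then 1 else 0 : ℤ) •
        (D.dividedIterate p a * (D.dividedIterate (N - p) b * c)) := by
  rcases le_or_gt 0 r with hr | hr
  · rw [D.vertexProduct_of_nonneg hr, eq_comm]
    exact sum_eq_zero fun p _ => by rw [if_neg (by omega), zero_smul]
  rcases le_or_gt 0 s with hs | hs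
  · rw [D.vertexProduct_of_nonneg hs, vertexProduct_zero, eq_comm]
    exact sum_eq_zero fun p hp => by rw [if_neg (by have := mem_range.1 hp; omega), zero_smul]
  obtain ⟨p, rfl⟩ : ∃ p : ℕ, r = -p - 1 := ⟨(-r - 1).toNat, by omega⟩
  obtain ⟨q, rfl⟩ : ∃ q : ℕ, s = -q - 1 := ⟨(-s - 1).toNat, by omega⟩
  obtain rfl : N = p + q := by omega
  rw [vertexProduct_neg_sub_one, vertexProduct_neg_sub_one,
    sum_eq_single_of_mem p (mem_range.2 (by omega)) fun i _ hi => by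
      rw [if_neg (by omega), zero_smul],
    if_pos rfl, one_smul, Nat.add_sub_cancel_left]

theorem vertexProduct_vertexProduct_left_eq_sum [CharZero K] (N : ℕ) {r s : ℤ}
    (h : r + s = -N - 2) (a b c : A) :
    D.vertexProduct r (D.vertexProduct s a b) c =
      ∑ p ∈ range (N + 1), (if s < 0 then (p.choose (-s - 1).toNat : ℤ) else 0) •
        (D.dividedIterate p a * (D.dividedIterate (N - p) b * c)) := by
  rcases le_or_gt 0 s with hs | hs
  · simp [D.vertexProduct_of_nonneg hs, if_neg (not_lt.2 hs)]
  obtain ⟨σ, rfl⟩ : ∃ σ : ℕ, s = -σ - 1 := ⟨(-s - 1).toNat, by omega⟩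
  have hσ : (-(-(σ : ℤ) - 1) - 1).toNat = σ := by omega
  rcases le_or_gt 0 r with hr | hr
  · rw [D.vertexProduct_of_nonneg hr, eq_comm]
    refine sum_eq_zero fun p hp => ?_
    rw [if_pos hs, hσ, Nat.choose_eq_zero_of_lt (by have := mem_range.1 hp; omega), Nat.cast_zero,
      zero_smul]
  obtain ⟨q, rfl⟩ : ∃ q : ℕ, r = -q - 1 := ⟨(-r - 1).toNat, by omega⟩
  obtain rfl : N = σ + q := by omega
  rw [vertexProduct_neg_sub_one, vertexProduct_neg_sub_one, dividedIterate_dividedIterate_mul,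
    sum_mul]
  refine sum_congr rfl fun p _ => ?_
  rw [if_pos hs, hσ, natCast_zsmul, smul_mul_assoc, mul_assoc]

end VertexProduct

section Borcherds

variable {K A : Type*} [Field K] [CharZero K] [CommRing A] [Algebra K A] (D : Derivation K A A)

theorem vertexProduct_borcherds (a b c : A) (m n k : ℤ) :
    (∑ᶠ j : ℕ, Ring.choose m j • D.vertexProduct (m + k - j) (D.vertexProduct (n + j) a b) c) =
      ∑ᶠ j : ℕ, ((-1 : ℤ) ^ j * Ring.choose n j) •
        (D.vertexProduct (m + n - j) a (D.vertexProduct (k + j) b c)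
          - (n.negOnePow : ℤ) • D.vertexProduct (n + k - j) b (D.vertexProduct (m + j) a c)) := by
  rcases le_or_gt (-1) (m + n + k) with hdeg | hN
  · have hL (j : ℕ) : D.vertexProduct (m + k - j) (D.vertexProduct (n + j) a b) c = 0 :=
      D.vertexProduct_vertexProduct_left_eq_zero (by omega) _ _ _
    have hR₁ (j : ℕ) : D.vertexProduct (m + n - j) a (D.vertexProduct (k + j) b c) = 0 :=
      D.vertexProduct_vertexProduct_eq_zero (by omega) _ _ _
    have hR₂ (j : ℕ) : D.vertexProduct (n + k - j) b (D.vertexProduct (m + j) a c) = 0 :=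
      D.vertexProduct_vertexProduct_eq_zero (by omega) _ _ _
    simp only [hL, hR₁, hR₂, smul_zero, sub_self, finsum_zero]
  obtain ⟨N, hN⟩ : ∃ N : ℕ, m + n + k = -N - 2 := ⟨(-(m + n + k) - 2).toNat, by omega⟩
  have hL (j : ℕ) :
      Ring.choose m j • D.vertexProduct (m + k - j) (D.vertexProduct (n + j) a b) c =
      ∑ p ∈ range (N + 1), borcherdsLeftCoeff m n p j •
        (D.dividedIterate p a * (D.dividedIterate (N - p) b * c)) := by
    rw [D.vertexProduct_vertexProduct_left_eq_sum N (by omega), smul_sum]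
    simp only [smul_smul, borcherdsLeftCoeff]
  have hR (j : ℕ) : ((-1 : ℤ) ^ j * Ring.choose n j) •
        (D.vertexProduct (m + n - j) a (D.vertexProduct (k + j) b c)
          - (n.negOnePow : ℤ) • D.vertexProduct (n + k - j) b (D.vertexProduct (m + j) a c)) =
      ∑ p ∈ range (N + 1), borcherdsRightCoeff m n p j •
        (D.dividedIterate p a * (D.dividedIterate (N - p) b * c)) := by
    rw [D.vertexProduct_left_comm (n + k - j), D.vertexProduct_vertexProduct_eq_sum N (by omega),
      D.vertexProduct_vertexProduct_eq_sum N (by omega), smul_sum, ← sum_sub_distrib, smul_sum]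
    refine sum_congr rfl fun p _ => ?_
    rw [smul_smul, ← sub_smul, smul_smul, borcherdsRightCoeff]
  rw [finsum_congr hL, finsum_congr hR,
    finsum_sum_smul_comm _ _ _ fun p _ => finite_support_borcherdsLeftCoeff m n p,
    finsum_sum_smul_comm _ _ _ fun p _ => finite_support_borcherdsRightCoeff m n p]
  exact sum_congr rfl fun p _ => by
    rw [finsum_borcherdsLeftCoeff_eq_finsum_borcherdsRightCoeff]

end Borcherds

end Derivation



/-- a commutative associative unital ℂ-algebra `A` with a derivation `T`
becomes a vertex algebra with vacuum `1`, `a_(n) b = 0` for `n ≥ 0` and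
`a_(n) b = (T^(−n−1) a/(−n−1)!) * b` for `n ≤ −1`: truncation, the vacuum axioms
and the Borcherds identity all hold. -/
theorem comm_alg_with_derivation_gives_vertex_algebra
    (A : Type) [CommRing A] [Algebra ℂ A] (T : Derivation ℂ A A)
    (f : ℤ → A → A → A)
    (hf : ∀ (n : ℤ) (a b : A), f n a b =
      if 0 ≤ n then 0
      else ((Nat.factorial ((-n - 1).toNat) : ℂ))⁻¹ • ((⇑T)^[(-n - 1).toNat] a * b)) :
    (∀ a b : A, ∃ N : ℤ, ∀ n : ℤ, N ≤ n → f n a b = 0) ∧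
    (∀ (n : ℤ) (a : A), f n 1 a = if n = -1 then a else 0) ∧
    (∀ a : A, f (-1) a 1 = a) ∧
    (∀ (a : A) (n : ℤ), 0 ≤ n → f n a 1 = 0) ∧
    (∀ (a b c : A) (m n k : ℤ),
      (∑ᶠ j : ℕ, Ring.choose m j • f (m + k - (j : ℤ)) (f (n + (j : ℤ)) a b) c) =
      ∑ᶠ j : ℕ, ((-1 : ℤ) ^ j * Ring.choose n j) •
        (f (m + n - (j : ℤ)) a (f (k + (j : ℤ)) b c)
          - (n.negOnePow : ℤ) • f (n + k - (j : ℤ)) b (f (m + (j : ℤ)) a c))) := by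
  obtain rfl : f = T.vertexProduct := by
    funext n a b
    rw [hf, Derivation.vertexProduct, Derivation.dividedIterate, smul_mul_assoc]
  exact ⟨fun a b => ⟨0, fun n hn => T.vertexProduct_of_nonneg hn a b⟩, T.one_vertexProduct,
    fun a => by rw [Derivation.vertexProduct_neg_one, mul_one],
    fun a n hn => T.vertexProduct_of_nonneg hn a 1, T.vertexProduct_borcherds⟩
end

section
/- Let V = ⊕_{m∈ℤ} V[m] be a ℤ-graded vertex algebra (each product _(n) has degree 0 with respect to the grading). Define new products: u ∗_(n) v = u_(n) v if deg(u)·deg(v) ≥ 0, and u ∗_(n) v = 0 if deg(u)·deg(v) < 0 (for homogeneous u ∈ V[deg u], v ∈ V[deg v]). For t ∈ ℂ*, the rescaling φ_t(v) = t^{|m|} v for v ∈ V[m] conjugates the original products to products _(n),t, where u _(n),t v = u_(n) v if deg(u)·deg(v) ≥ 0 and u _(n),t v = t^{|deg u| + |deg v| − |deg u + deg v|} u_(n) v otherwise; in particular the exponent |deg u| + |deg v| − |deg u + deg v| is a nonnegative even integer, strictly positive when deg(u)·deg(v) < 0, so the limit t → 0 of the products _(n),t exists and equals ∗_(n). -/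
structure VertexAlgebra (V : Type) [AddCommGroup V] [Module ℂ V] where
  vac : V
  mul : ℤ → V →ₗ[ℂ] V →ₗ[ℂ] V
  truncation : ∀ a b : V, ∃ N : ℤ, ∀ n : ℤ, N ≤ n → mul n a b = 0
  vac_mul : ∀ (n : ℤ) (a : V), mul n vac a = if n = -1 then a else 0
  mul_vac : ∀ a : V, mul (-1) a vac = a
  mul_vac_nonneg : ∀ (a : V) (n : ℤ), 0 ≤ n → mul n a vac = 0
  borcherds : ∀ (a b c : V) (m n k : ℤ),
    (∑ᶠ j : ℕ, Ring.choose m j • mul (m + k - (j : ℤ)) (mul (n + (j : ℤ)) a b) c) =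
    ∑ᶠ j : ℕ, ((-1 : ℤ) ^ j * Ring.choose n j) •
      (mul (m + n - (j : ℤ)) a (mul (k + (j : ℤ)) b c)
        - (n.negOnePow : ℤ) • mul (n + k - (j : ℤ)) b (mul (m + (j : ℤ)) a c))

/-!
The rescaling `φ_t` multiplies a product of homogeneous elements of degrees `d` and `e` by
`t ^ (|d| + |e|)`, while `φ_t` on the degree `d + e` part only accounts for `t ^ |d + e|`; the
remaining factor is `t` raised to the triangle-inequality defect `|d| + |e| - |d + e|`. This defect
is even (it is congruent to `d + e - (d + e)` mod 2) and vanishes exactly when `d` and `e` have the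
same sign, so as `t → 0` the products of degrees of opposite sign die and the others survive.
-/

theorem abs_add_abs_sub_abs_add_nonneg {G : Type*} [AddCommGroup G] [Lattice G] [AddLeftMono G]
    (a b : G) : 0 ≤ |a| + |b| - |a + b| :=
  sub_nonneg.mpr (abs_add_le a b)

section TriangleDefect

variable {α : Type*} [Ring α] [LinearOrder α] [IsStrictOrderedRing α]

theorem abs_add_abs_sub_abs_add_eq_zero_of_mul_nonneg {a b : α} (h : 0 ≤ a * b) :
    |a| + |b| - |a + b| = 0 := by
  rw [sub_eq_zero, eq_comm, abs_add_eq_add_abs_iff]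
  exact mul_nonneg_iff.mp h

theorem abs_add_abs_sub_abs_add_pos_of_mul_neg {a b : α} (h : a * b < 0) :
    0 < |a| + |b| - |a + b| := by
  refine sub_pos.mpr ((abs_add_le a b).lt_of_ne fun heq => ?_)
  rcases abs_add_eq_add_abs_iff a b |>.mp heq with ⟨ha, hb⟩ | ⟨ha, hb⟩
  · exact h.not_ge (mul_nonneg ha hb)
  · exact h.not_ge (mul_nonneg_of_nonpos_of_nonpos ha hb)

end TriangleDefect

theorem Int.even_abs_add_abs_sub_abs_add (a b : ℤ) : Even (|a| + |b| - |a + b|) := by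
  simp only [← Int.natCast_natAbs, Int.even_sub, Int.even_add, Int.even_coe_nat, Int.natAbs_even]

theorem Int.natAbs_add_natAbs_eq (a b : ℤ) :
    a.natAbs + b.natAbs = (a + b).natAbs + (|a| + |b| - |a + b|).toNat := by
  zify
  rw [Int.toNat_of_nonneg (abs_add_abs_sub_abs_add_nonneg a b)]
  ring

theorem LinearMap.pow_smul_pow_smul₂ {R M N P : Type*} [CommSemiring R] [AddCommMonoid M]
    [AddCommMonoid N] [AddCommMonoid P] [Module R M] [Module R N] [Module R P]
    (f : M →ₗ[R] N →ₗ[R] P) (r : R) {i j k l : ℕ} (h : i + j = k + l) (x : M) (y : N) :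
    f (r ^ i • x) (r ^ j • y) = r ^ k • r ^ l • f x y := by
  rw [map_smul₂, map_smul, smul_smul, smul_smul, ← pow_add, ← pow_add, h]

theorem rescaled_products_degenerate_general
    (V : Type) [AddCommGroup V] [Module ℂ V] (𝒱 : VertexAlgebra V)
    (P : ℤ → Submodule ℂ V) :
    (∀ d e : ℤ, 0 ≤ |d| + |e| - |d + e| ∧ Even (|d| + |e| - |d + e|) ∧
      (0 ≤ d * e → |d| + |e| - |d + e| = 0) ∧ (d * e < 0 → 0 < |d| + |e| - |d + e|)) ∧
    -- conjugation by the rescaling φ_t : v ↦ t^{|m|} v on V[m]: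
    (∀ (t : ℂ) (d e n : ℤ) (u v : V), u ∈ P d → v ∈ P e →
      𝒱.mul n ((t ^ d.natAbs) • u) ((t ^ e.natAbs) • v) =
        (t ^ (d + e).natAbs) • ((t ^ (|d| + |e| - |d + e|).toNat) • 𝒱.mul n u v)) ∧
    -- the t → 0 limit of the rescaled product: equal to u_(n) v when deg u · deg v ≥ 0,
    -- and 0 when deg u · deg v < 0
    (∀ (d e n : ℤ) (u v : V), u ∈ P d → v ∈ P e →
      (0 ≤ d * e → ((1 : ℂ) ^ (|d| + |e| - |d + e|).toNat) • 𝒱.mul n u v = 𝒱.mul n u v) ∧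
      (d * e < 0 → ((0 : ℂ) ^ (|d| + |e| - |d + e|).toNat) • 𝒱.mul n u v = 0)) := by
  refine ⟨fun d e => ⟨abs_add_abs_sub_abs_add_nonneg d e, Int.even_abs_add_abs_sub_abs_add d e,
      abs_add_abs_sub_abs_add_eq_zero_of_mul_nonneg, abs_add_abs_sub_abs_add_pos_of_mul_neg⟩,
    fun t d e n u v _ _ => (𝒱.mul n).pow_smul_pow_smul₂ t (Int.natAbs_add_natAbs_eq d e) u v,
    fun d e n u v _ _ => ⟨fun _ => by rw [one_pow, one_smul], fun h => ?_⟩⟩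
  have hpos : 0 < (|d| + |e| - |d + e|).toNat :=
    Int.lt_toNat.mpr (abs_add_abs_sub_abs_add_pos_of_mul_neg h)
  rw [zero_pow hpos.ne', zero_smul]

/-- in a ℤ-graded vertex algebra, the rescaling `φ_t = t^{|m|}` on `V[m]`
conjugates the products `_(n)` into `_(n),t` with
`u _(n),t v = t^{|deg u|+|deg v|−|deg u + deg v|} u_(n) v`; the exponent is a nonnegative
even integer, zero when `deg u · deg v ≥ 0` and strictly positive when `deg u · deg v < 0`,
so the `t → 0` limit exists and equals the degenerate products `∗_(n)`. -/
theorem rescaled_products_degenerate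
    (V : Type) [AddCommGroup V] [Module ℂ V] (𝒱 : VertexAlgebra V)
    (P : ℤ → Submodule ℂ V)
    (hgr : ∀ (d e n : ℤ), ∀ u ∈ P d, ∀ v ∈ P e, 𝒱.mul n u v ∈ P (d + e)) :
    (∀ d e : ℤ, 0 ≤ |d| + |e| - |d + e| ∧ Even (|d| + |e| - |d + e|) ∧
      (0 ≤ d * e → |d| + |e| - |d + e| = 0) ∧ (d * e < 0 → 0 < |d| + |e| - |d + e|)) ∧
    -- conjugation by the rescaling φ_t : v ↦ t^{|m|} v on V[m]:
    (∀ (t : ℂ) (d e n : ℤ) (u v : V), u ∈ P d → v ∈ P e →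
      𝒱.mul n ((t ^ d.natAbs) • u) ((t ^ e.natAbs) • v) =
        (t ^ (d + e).natAbs) • ((t ^ (|d| + |e| - |d + e|).toNat) • 𝒱.mul n u v)) ∧
    -- the t → 0 limit of the rescaled product: equal to u_(n) v when deg u · deg v ≥ 0,
    -- and 0 when deg u · deg v < 0
    (∀ (d e n : ℤ) (u v : V), u ∈ P d → v ∈ P e →
      (0 ≤ d * e → ((1 : ℂ) ^ (|d| + |e| - |d + e|).toNat) • 𝒱.mul n u v = 𝒱.mul n u v) ∧
      (d * e < 0 → ((0 : ℂ) ^ (|d| + |e| - |d + e|).toNat) • 𝒱.mul n u v = 0)) :=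
  rescaled_products_degenerate_general V 𝒱 P
end

section
/- Let V = ⊕_{m∈ℤ} V[m] be a ℤ-graded vertex algebra. The degenerate products u ∗_(n) v (equal to u_(n) v if deg(u)·deg(v) ≥ 0 and to 0 if deg(u)·deg(v) < 0, extended bilinearly) again satisfy the vertex algebra axioms: the vacuum axioms hold, ∗_(n) is eventually zero in n, and the Borcherds identity holds for the products ∗_(n). -/
open Filter Function

theorem Function.support_finite_of_eventually_zero {N : Type*} [Zero N] {f : ℕ → N}
    (h : ∀ᶠ j in atTop, f j = 0) : (support f).Finite :=
  eventually_cofinite.mp (Nat.cofinite_eq_atTop ▸ h)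

theorem finsum_add_of_eventually_zero {N : Type*} [AddCommMonoid N] {f g : ℕ → N}
    (hf : ∀ᶠ j in atTop, f j = 0) (hg : ∀ᶠ j in atTop, g j = 0) :
    ∑ᶠ j, (f j + g j) = ∑ᶠ j, f j + ∑ᶠ j, g j :=
  finsum_add_distrib (support_finite_of_eventually_zero hf)
    (support_finite_of_eventually_zero hg)

namespace DirectSum.Decomposition

variable {ι M σ : Type*} [DecidableEq ι] [Nonempty ι] [AddCommMonoid M] [SetLike σ M]
  [AddSubmonoidClass σ M] (ℳ : ι → σ) [Decomposition ℳ]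

theorem inductionOn₂ {motive : M → M → Prop}
    (homogeneous : ∀ i j, ∀ a ∈ ℳ i, ∀ b ∈ ℳ j, motive a b)
    (add_left : ∀ a a' b, motive a b → motive a' b → motive (a + a') b)
    (add_right : ∀ a b b', motive a b → motive a b' → motive a (b + b')) (a b : M) :
    motive a b := by
  have homogeneous_left : ∀ i, ∀ a ∈ ℳ i, motive a b := fun i a ha =>
    Decomposition.inductionOn ℳ (homogeneous i i a ha 0 (zero_mem _))
      (fun {j} b => homogeneous i j a ha b b.2) (add_right a) b
  induction a using Decomposition.inductionOn ℳ with
  | zero => exact homogeneous_left (Classical.arbitrary ι) 0 (zero_mem _)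
  | homogeneous a => exact homogeneous_left _ a a.2
  | add a a' h h' => exact add_left a a' b h h'

theorem inductionOn₃ {motive : M → M → M → Prop}
    (homogeneous : ∀ i j l, ∀ a ∈ ℳ i, ∀ b ∈ ℳ j, ∀ c ∈ ℳ l, motive a b c)
    (add₁ : ∀ a a' b c, motive a b c → motive a' b c → motive (a + a') b c)
    (add₂ : ∀ a b b' c, motive a b c → motive a b' c → motive a (b + b') c)
    (add₃ : ∀ a b c c', motive a b c → motive a b c' → motive a b (c + c')) (a b c : M) :
    motive a b c :=
  inductionOn₂ ℳ (motive := fun a b => ∀ c, motive a b c)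
    (fun i j a ha b hb c =>
      Decomposition.inductionOn ℳ (homogeneous i j i a ha b hb 0 (zero_mem _))
        (fun {l} c => homogeneous i j l a ha b hb c c.2) (add₃ a b) c)
    (fun a a' b h h' c => add₁ a a' b c (h c) (h' c))
    (fun a b b' h h' c => add₂ a b b' c (h c) (h' c)) a b c

end DirectSum.Decomposition

section Borcherds

variable {R M : Type*} [CommRing R] [AddCommGroup M] [Module R M]
  {μ : ℤ → M →ₗ[R] M →ₗ[R] M}

def IsTruncated (μ : ℤ → M →ₗ[R] M →ₗ[R] M) : Prop :=
  ∀ a b : M, ∀ᶠ n in atTop, μ n a b = 0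

noncomputable def borcherdsLeft (μ : ℤ → M →ₗ[R] M →ₗ[R] M) (m n k : ℤ) (a b c : M) :
    M :=
  ∑ᶠ j : ℕ, Ring.choose m j • μ (m + k - (j : ℤ)) (μ (n + (j : ℤ)) a b) c

noncomputable def borcherdsRight (μ : ℤ → M →ₗ[R] M →ₗ[R] M) (m n k : ℤ) (a b c : M) :
    M :=
  ∑ᶠ j : ℕ, ((-1 : ℤ) ^ j * Ring.choose n j) •
    (μ (m + n - (j : ℤ)) a (μ (k + (j : ℤ)) b c)
      - (n.negOnePow : ℤ) • μ (n + k - (j : ℤ)) b (μ (m + (j : ℤ)) a c))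

theorem IsTruncated.eventually_shift (hμ : IsTruncated μ) (n : ℤ) (a b : M) :
    ∀ᶠ j : ℕ in atTop, μ (n + j) a b = 0 :=
  (tendsto_atTop_add_const_left _ n tendsto_natCast_atTop_atTop).eventually (hμ a b)

theorem IsTruncated.borcherdsLeft_summand_eventually_zero (hμ : IsTruncated μ) (m n k : ℤ)
    (a b c : M) :
    ∀ᶠ j : ℕ in atTop,
      Ring.choose m j • μ (m + k - (j : ℤ)) (μ (n + (j : ℤ)) a b) c = 0 :=
  (hμ.eventually_shift n a b).mono fun j hj => by simp [hj]

theorem IsTruncated.borcherdsRight_summand_eventually_zero (hμ : IsTruncated μ) (m n k : ℤ)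
    (a b c : M) :
    ∀ᶠ j : ℕ in atTop, ((-1 : ℤ) ^ j * Ring.choose n j) •
      (μ (m + n - (j : ℤ)) a (μ (k + (j : ℤ)) b c)
        - (n.negOnePow : ℤ) • μ (n + k - (j : ℤ)) b (μ (m + (j : ℤ)) a c)) = 0 :=
  ((hμ.eventually_shift k b c).and (hμ.eventually_shift m a c)).mono fun j hj => by
    simp [hj.1, hj.2]

theorem IsTruncated.borcherdsLeft_add₁ (hμ : IsTruncated μ) (m n k : ℤ) (a a' b c : M) :
    borcherdsLeft μ m n k (a + a') b c =
      borcherdsLeft μ m n k a b c + borcherdsLeft μ m n k a' b c := by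
  simp only [borcherdsLeft, map_add, LinearMap.add_apply, smul_add]
  exact finsum_add_of_eventually_zero (hμ.borcherdsLeft_summand_eventually_zero m n k a b c)
    (hμ.borcherdsLeft_summand_eventually_zero m n k a' b c)

theorem IsTruncated.borcherdsLeft_add₂ (hμ : IsTruncated μ) (m n k : ℤ) (a b b' c : M) :
    borcherdsLeft μ m n k a (b + b') c =
      borcherdsLeft μ m n k a b c + borcherdsLeft μ m n k a b' c := by
  simp only [borcherdsLeft, map_add, LinearMap.add_apply, smul_add]
  exact finsum_add_of_eventually_zero (hμ.borcherdsLeft_summand_eventually_zero m n k a b c)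
    (hμ.borcherdsLeft_summand_eventually_zero m n k a b' c)

theorem IsTruncated.borcherdsLeft_add₃ (hμ : IsTruncated μ) (m n k : ℤ) (a b c c' : M) :
    borcherdsLeft μ m n k a b (c + c') =
      borcherdsLeft μ m n k a b c + borcherdsLeft μ m n k a b c' := by
  simp only [borcherdsLeft, map_add, smul_add]
  exact finsum_add_of_eventually_zero (hμ.borcherdsLeft_summand_eventually_zero m n k a b c)
    (hμ.borcherdsLeft_summand_eventually_zero m n k a b c')

theorem IsTruncated.borcherdsRight_add₁ (hμ : IsTruncated μ) (m n k : ℤ) (a a' b c : M) :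
    borcherdsRight μ m n k (a + a') b c =
      borcherdsRight μ m n k a b c + borcherdsRight μ m n k a' b c := by
  simp only [borcherdsRight, map_add, LinearMap.add_apply, smul_add, add_sub_add_comm]
  exact finsum_add_of_eventually_zero (hμ.borcherdsRight_summand_eventually_zero m n k a b c)
    (hμ.borcherdsRight_summand_eventually_zero m n k a' b c)

theorem IsTruncated.borcherdsRight_add₂ (hμ : IsTruncated μ) (m n k : ℤ) (a b b' c : M) :
    borcherdsRight μ m n k a (b + b') c =
      borcherdsRight μ m n k a b c + borcherdsRight μ m n k a b' c := by
  simp only [borcherdsRight, map_add, LinearMap.add_apply, smul_add, add_sub_add_comm]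
  exact finsum_add_of_eventually_zero (hμ.borcherdsRight_summand_eventually_zero m n k a b c)
    (hμ.borcherdsRight_summand_eventually_zero m n k a b' c)

theorem IsTruncated.borcherdsRight_add₃ (hμ : IsTruncated μ) (m n k : ℤ) (a b c c' : M) :
    borcherdsRight μ m n k a b (c + c') =
      borcherdsRight μ m n k a b c + borcherdsRight μ m n k a b c' := by
  simp only [borcherdsRight, map_add, smul_add, add_sub_add_comm]
  exact finsum_add_of_eventually_zero (hμ.borcherdsRight_summand_eventually_zero m n k a b c)
    (hμ.borcherdsRight_summand_eventually_zero m n k a b c')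

theorem IsTruncated.borcherds_of_homogeneous {ι : Type*} [DecidableEq ι] [Nonempty ι]
    (P : ι → Submodule R M) [DirectSum.Decomposition P] (hμ : IsTruncated μ) (m n k : ℤ)
    (h : ∀ i j l, ∀ a ∈ P i, ∀ b ∈ P j, ∀ c ∈ P l,
      borcherdsLeft μ m n k a b c = borcherdsRight μ m n k a b c) (a b c : M) :
    borcherdsLeft μ m n k a b c = borcherdsRight μ m n k a b c := by
  induction a, b, c using DirectSum.Decomposition.inductionOn₃ P with
  | homogeneous i j l a ha b hb c hc => exact h i j l a ha b hb c hc
  | add₁ a a' b c h h' => rw [hμ.borcherdsLeft_add₁, hμ.borcherdsRight_add₁, h, h']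
  | add₂ a b b' c h h' => rw [hμ.borcherdsLeft_add₂, hμ.borcherdsRight_add₂, h, h']
  | add₃ a b c c' h h' => rw [hμ.borcherdsLeft_add₃, hμ.borcherdsRight_add₃, h, h']

end Borcherds

section Degeneration

variable {R M : Type*} [CommRing R] [AddCommGroup M] [Module R M] {P : ℤ → Submodule R M}
  {μ ν : ℤ → M →ₗ[R] M →ₗ[R] M}

def IsGradedProduct (P : ℤ → Submodule R M) (μ : ℤ → M →ₗ[R] M →ₗ[R] M) : Prop :=
  ∀ d e n : ℤ, ∀ u ∈ P d, ∀ v ∈ P e, μ n u v ∈ P (d + e)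

def IsDegeneration (P : ℤ → Submodule R M) (μ ν : ℤ → M →ₗ[R] M →ₗ[R] M) : Prop :=
  ∀ d e n : ℤ, ∀ u ∈ P d, ∀ v ∈ P e, ν n u v = if 0 ≤ d * e then μ n u v else 0

namespace IsDegeneration

theorem isTruncated [DirectSum.Decomposition P] (hν : IsDegeneration P μ ν)
    (hμ : IsTruncated μ) : IsTruncated ν := by
  intro a b
  induction a, b using DirectSum.Decomposition.inductionOn₂ P with
  | homogeneous d e a ha b hb =>
    simp_rw [hν d e _ a ha b hb]
    split_ifs
    · exact hμ a b
    · exact Eventually.of_forall fun _ => rfl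
  | add_left a a' b h h' => exact (h.and h').mono fun n hn => by simp [hn.1, hn.2]
  | add_right a b b' h h' => exact (h.and h').mono fun n hn => by simp [hn.1, hn.2]

theorem apply_eq_of_mem_zero_left [DirectSum.Decomposition P] (hν : IsDegeneration P μ ν)
    {u : M} (hu : u ∈ P 0) (n : ℤ) (v : M) : ν n u v = μ n u v :=
  LinearMap.congr_fun (DirectSum.decompose_lhom_ext P fun e => LinearMap.ext fun v => by
    simp [hν 0 e n u hu v v.2]) v

theorem apply_eq_of_mem_zero_right [DirectSum.Decomposition P] (hν : IsDegeneration P μ ν)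
    {u : M} (hu : u ∈ P 0) (n : ℤ) (v : M) : ν n v u = μ n v u :=
  LinearMap.congr_fun (DirectSum.decompose_lhom_ext P (f := (ν n).flip u) (g := (μ n).flip u)
    fun e => LinearMap.ext fun v => by simp [hν e 0 n v v.2 u hu]) v

theorem apply_apply_left (hν : IsDegeneration P μ ν) (hμ : IsGradedProduct P μ)
    {d e f : ℤ} {a b c : M} (ha : a ∈ P d) (hb : b ∈ P e) (hc : c ∈ P f) (p q : ℤ) :
    ν p (ν q a b) c = if 0 ≤ d * e ∧ 0 ≤ (d + e) * f then μ p (μ q a b) c else 0 := by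
  by_cases hde : 0 ≤ d * e
  · rw [hν d e q a ha b hb, if_pos hde, hν (d + e) f p _ (hμ d e q a ha b hb) c hc]
    simp only [hde, true_and]
  · simp [hν d e q a ha b hb, hde]

theorem apply_apply_right (hν : IsDegeneration P μ ν) (hμ : IsGradedProduct P μ)
    {d e f : ℤ} {a b c : M} (ha : a ∈ P d) (hb : b ∈ P e) (hc : c ∈ P f) (p q : ℤ) :
    ν p a (ν q b c) = if 0 ≤ e * f ∧ 0 ≤ d * (e + f) then μ p a (μ q b c) else 0 := by
  by_cases hef : 0 ≤ e * f
  · rw [hν e f q b hb c hc, if_pos hef, hν d (e + f) p a ha _ (hμ e f q b hb c hc)]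
    simp only [hef, true_and]
  · simp [hν e f q b hb c hc, hef]

theorem borcherds_of_mem (hν : IsDegeneration P μ ν) (hμ : IsGradedProduct P μ)
    {d e f : ℤ} {a b c : M} (ha : a ∈ P d) (hb : b ∈ P e) (hc : c ∈ P f) (m n k : ℤ)
    (hB : borcherdsLeft μ m n k a b c = borcherdsRight μ m n k a b c) :
    borcherdsLeft ν m n k a b c = borcherdsRight ν m n k a b c := by
  let sameSign := (0 ≤ d ∧ 0 ≤ e ∧ 0 ≤ f) ∨ (d ≤ 0 ∧ e ≤ 0 ∧ f ≤ 0)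
  have h₁ : (0 ≤ d * e ∧ 0 ≤ (d + e) * f) ↔ sameSign := by
    simp only [sameSign, mul_nonneg_iff]; omega
  have h₂ : (0 ≤ e * f ∧ 0 ≤ d * (e + f)) ↔ sameSign := by
    simp only [sameSign, mul_nonneg_iff]; omega
  have h₃ : (0 ≤ d * f ∧ 0 ≤ e * (d + f)) ↔ sameSign := by
    simp only [sameSign, mul_nonneg_iff]; omega
  simp only [borcherdsLeft, borcherdsRight, hν.apply_apply_left hμ ha hb hc,
    hν.apply_apply_right hμ ha hb hc, hν.apply_apply_right hμ hb ha hc, h₁, h₂, h₃]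
  split_ifs
  · exact hB
  · simp

end IsDegeneration

end Degeneration

/-- for a ℤ-graded vertex algebra `V = ⊕ V[m]` (internal grading,
products of degree 0, vacuum in degree 0), the degenerate bilinear products
`u ∗_(n) v = u_(n) v` if `deg u · deg v ≥ 0`, `= 0` if `deg u · deg v < 0`
(extended bilinearly) again satisfy the vertex algebra axioms: the vacuum axioms,
truncation, and the Borcherds identity. -/
theorem degenerate_products_vertex_algebra
    (V : Type) [AddCommGroup V] [Module ℂ V] (𝒱 : VertexAlgebra V)
    (P : ℤ → Submodule ℂ V) [DirectSum.Decomposition P]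
    (hvac : 𝒱.vac ∈ P 0)
    (hgr : ∀ (d e n : ℤ), ∀ u ∈ P d, ∀ v ∈ P e, 𝒱.mul n u v ∈ P (d + e))
    (star : ℤ → V →ₗ[ℂ] V →ₗ[ℂ] V)
    (hstar : ∀ (d e n : ℤ), ∀ u ∈ P d, ∀ v ∈ P e,
      star n u v = if 0 ≤ d * e then 𝒱.mul n u v else 0) :
    (∀ a b : V, ∃ N : ℤ, ∀ n : ℤ, N ≤ n → star n a b = 0) ∧
    (∀ (n : ℤ) (a : V), star n 𝒱.vac a = if n = -1 then a else 0) ∧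
    (∀ a : V, star (-1) a 𝒱.vac = a) ∧
    (∀ (a : V) (n : ℤ), 0 ≤ n → star n a 𝒱.vac = 0) ∧
    (∀ (a b c : V) (m n k : ℤ),
      (∑ᶠ j : ℕ, Ring.choose m j • star (m + k - (j : ℤ)) (star (n + (j : ℤ)) a b) c) =
      ∑ᶠ j : ℕ, ((-1 : ℤ) ^ j * Ring.choose n j) •
        (star (m + n - (j : ℤ)) a (star (k + (j : ℤ)) b c)
          - (n.negOnePow : ℤ) • star (n + k - (j : ℤ)) b (star (m + (j : ℤ)) a c))) := by
  have hμ : IsTruncated 𝒱.mul := fun a b => eventually_atTop.mpr (𝒱.truncation a b)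
  have hν : IsDegeneration P 𝒱.mul star := hstar
  have hνt : IsTruncated star := hν.isTruncated hμ
  refine ⟨fun a b => eventually_atTop.mp (hνt a b), fun n a => ?_, fun a => ?_,
    fun a n hn => ?_, fun a b c m n k => ?_⟩
  · rw [hν.apply_eq_of_mem_zero_left hvac, 𝒱.vac_mul]
  · rw [hν.apply_eq_of_mem_zero_right hvac, 𝒱.mul_vac]
  · rw [hν.apply_eq_of_mem_zero_right hvac, 𝒱.mul_vac_nonneg a n hn]
  · exact hνt.borcherds_of_homogeneous P m n k (fun _ _ _ a ha b hb c hc =>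
      hν.borcherds_of_mem hgr ha hb hc m n k (𝒱.borcherds a b c m n k)) a b c
end
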